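/- For every n ≥ 1 and every invertible linear map M : ℝ^n → ℝ^n, there exists a constant ℓ ∈ (0, 1] such that for all nonzero vectors v, w ∈ ℝ^n, the angle between Mv and Mw is at least ℓ times the angle between v and w, where the angle between nonzero vectors x, y is arccos(⟨x,y⟩/(‖x‖·‖y‖)) with respect to the standard Euclidean inner product. -/

import Mathlib

namespace RewardPaper

/-- A probability distribution on a finite type, represented as a function. -/
def IsDist {X : Type*} [Fintype X] (p : X → ℝ) : Prop :=
  (∀ x, 0 ≤ p x) ∧ (∑ x, p x) = 1

/-- Reward functions on `S × A × S`. -/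
abbrev Reward (S A : Type*) := S → A → S → ℝ

/-- A policy assigns to each state a probability distribution over actions. -/
def IsPolicy {S A : Type*} [Fintype A] (π : S → A → ℝ) : Prop := ∀ s, IsDist (π s)

/-- The type of policies. -/
abbrev Policy (S A : Type*) [Fintype A] := {π : S → A → ℝ // IsPolicy π}

/-- The distribution over states at time `t` of the Markov chain induced by
`τ`, `μ0` and the policy `π`. -/
noncomputable def stateDist {S A : Type*} [Fintype S] [Fintype A]
    (τ : S → A → S → ℝ) (μ0 : S → ℝ) (π : S → A → ℝ) : ℕ → S → ℝ
  | 0 => μ0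
  | (t + 1) => fun s' => ∑ s, ∑ a, stateDist τ μ0 π t s * π s a * τ s a s'

/-- Policy evaluation function `J_R(π)`: expected discounted return of `π` under `R`. -/
noncomputable def J {S A : Type*} [Fintype S] [Fintype A]
    (τ : S → A → S → ℝ) (μ0 : S → ℝ) (γ : ℝ) (R : Reward S A)
    (π : S → A → ℝ) : ℝ :=
  ∑' t : ℕ, γ ^ t * ∑ s, ∑ a, ∑ s', stateDist τ μ0 π t s * π s a * τ s a s' * R s a s'

/-- The value function `V^π_R(s)`: expected discounted return starting from `s`. -/
noncomputable def V {S A : Type*} [Fintype S] [Fintype A] [DecidableEq S]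
    (τ : S → A → S → ℝ) (γ : ℝ) (R : Reward S A) (π : S → A → ℝ) (s : S) : ℝ :=
  J τ (fun s0 => if s0 = s then 1 else 0) γ R π

/-- Every state is reachable with positive probability under `τ` from `μ0`. -/
def AllReachable {S A : Type*} [Fintype S] [Fintype A]
    (τ : S → A → S → ℝ) (μ0 : S → ℝ) : Prop :=
  ∀ s, ∃ (π : S → A → ℝ) (t : ℕ), IsPolicy π ∧ 0 < stateDist τ μ0 π t s

/-- `R2` is produced by potential shaping of `R1`. -/
def PotentialShaping {S A : Type*} (γ : ℝ) (R1 R2 : Reward S A) : Prop :=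
  ∃ Φ : S → ℝ, ∀ s a s', R2 s a s' = R1 s a s' + γ * Φ s' - Φ s

/-- `R1` and `R2` differ by S'-redistribution with respect to `τ`. -/
def SRedist {S A : Type*} [Fintype S] (τ : S → A → S → ℝ) (R1 R2 : Reward S A) : Prop :=
  ∀ s a, (∑ s', τ s a s' * R1 s a s') = (∑ s', τ s a s' * R2 s a s')

/-- `R1` and `R2` differ by (a composition of) potential shaping and S'-redistribution. -/
def DifferBy {S A : Type*} [Fintype S] (γ : ℝ) (τ : S → A → S → ℝ)
    (R1 R2 : Reward S A) : Prop :=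
  ∃ R' : Reward S A, PotentialShaping γ R1 R' ∧ SRedist τ R' R2

/-- A canonicalisation function. -/
def IsCanon {S A : Type*} [Fintype S] (γ : ℝ) (τ : S → A → S → ℝ)
    (c : Reward S A → Reward S A) : Prop :=
  IsLinearMap ℝ c ∧ (∀ R, DifferBy γ τ R (c R)) ∧
    ∀ R1 R2, c R1 = c R2 ↔ DifferBy γ τ R1 R2

/-- `n` is a norm on the subset `X` of reward space. -/
def IsNormOn {S A : Type*} (X : Set (Reward S A)) (n : Reward S A → ℝ) : Prop :=
  (∀ x ∈ X, 0 ≤ n x) ∧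
  (∀ x ∈ X, (n x = 0 ↔ x = 0)) ∧
  (∀ x ∈ X, ∀ r : ℝ, n (r • x) = |r| * n x) ∧
  (∀ x ∈ X, ∀ y ∈ X, n (x + y) ≤ n x + n y)

/-- `p` is a norm on all of reward space. -/
def IsNorm {S A : Type*} (p : Reward S A → ℝ) : Prop := IsNormOn Set.univ p

/-- `m` is a metric on the subset `X` of reward space. -/
def IsMetricOn {S A : Type*} (X : Set (Reward S A)) (m : Reward S A → Reward S A → ℝ) : Prop :=
  (∀ x ∈ X, m x x = 0) ∧ (∀ x ∈ X, ∀ y ∈ X, 0 ≤ m x y) ∧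
  (∀ x ∈ X, ∀ y ∈ X, m x y = m y x) ∧
  (∀ x ∈ X, ∀ y ∈ X, ∀ z ∈ X, m x z ≤ m x y + m y z)

/-- `m` is an admissible metric on `X`: a metric bilipschitz equivalent to some norm. -/
def IsAdmissibleOn {S A : Type*} (X : Set (Reward S A))
    (m : Reward S A → Reward S A → ℝ) : Prop :=
  IsMetricOn X m ∧
  ∃ (p : Reward S A → ℝ) (l u : ℝ), IsNorm p ∧ 0 < l ∧ 0 < u ∧
    ∀ x ∈ X, ∀ y ∈ X, l * p (x - y) ≤ m x y ∧ m x y ≤ u * p (x - y)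

/-- `d` is a STARC metric. -/
def IsSTARC {S A : Type*} [Fintype S] (γ : ℝ) (τ : S → A → S → ℝ)
    (d : Reward S A → Reward S A → ℝ) : Prop :=
  ∃ (c : Reward S A → Reward S A) (n : Reward S A → ℝ)
    (m : Reward S A → Reward S A → ℝ) (s : Reward S A → Reward S A),
    IsCanon γ τ c ∧ IsNormOn (Set.range c) n ∧
    (∀ R, (n (c R) = 0 → s R = c R) ∧ (n (c R) ≠ 0 → s R = (n (c R))⁻¹ • c R)) ∧
    IsAdmissibleOn (Set.range s) m ∧
    ∀ R1 R2, d R1 R2 = m (s R1) (s R2)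

/-- An EPIC-like canonicalisation function: standardises potential shaping only. -/
def IsEpicLikeCanon {S A : Type*} (γ : ℝ) (c : Reward S A → Reward S A) : Prop :=
  IsLinearMap ℝ c ∧ (∀ R, PotentialShaping γ R (c R)) ∧
    ∀ R1 R2, c R1 = c R2 ↔ PotentialShaping γ R1 R2

/-- `d` is an EPIC-like metric. -/
def IsEpicLike {S A : Type*} (γ : ℝ) (d : Reward S A → Reward S A → ℝ) : Prop :=
  ∃ (c : Reward S A → Reward S A) (n : Reward S A → ℝ)
    (m : Reward S A → Reward S A → ℝ) (s : Reward S A → Reward S A),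
    IsEpicLikeCanon γ c ∧ IsNormOn (Set.range c) n ∧
    (∀ R, (n (c R) = 0 → s R = c R) ∧ (n (c R) ≠ 0 → s R = (n (c R))⁻¹ • c R)) ∧
    IsAdmissibleOn (Set.range c) m ∧
    ∀ R1 R2, d R1 R2 = m (s R1) (s R2)

/-- The maximal value of `J_R` over all policies. -/
noncomputable def maxJ {S A : Type*} [Fintype S] [Fintype A]
    (τ : S → A → S → ℝ) (μ0 : S → ℝ) (γ : ℝ) (R : Reward S A) : ℝ :=
  ⨆ π : Policy S A, J τ μ0 γ R π.1

/-- The minimal value of `J_R` over all policies. -/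
noncomputable def minJ {S A : Type*} [Fintype S] [Fintype A]
    (τ : S → A → S → ℝ) (μ0 : S → ℝ) (γ : ℝ) (R : Reward S A) : ℝ :=
  ⨅ π : Policy S A, J τ μ0 γ R π.1

/-- `R1` and `R2` induce the same ordering of policies. -/
def SameOrder {S A : Type*} [Fintype S] [Fintype A]
    (τ : S → A → S → ℝ) (μ0 : S → ℝ) (γ : ℝ) (R1 R2 : Reward S A) : Prop :=
  ∀ π π' : Policy S A,
    (J τ μ0 γ R1 π.1 ≤ J τ μ0 γ R1 π'.1 ↔ J τ μ0 γ R2 π.1 ≤ J τ μ0 γ R2 π'.1)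

/-- Soundness of a pseudometric on reward space. -/
def Sound {S A : Type*} [Fintype S] [Fintype A]
    (τ : S → A → S → ℝ) (μ0 : S → ℝ) (γ : ℝ)
    (d : Reward S A → Reward S A → ℝ) : Prop :=
  ∃ U : ℝ, 0 < U ∧ ∀ (R1 R2 : Reward S A) (π1 π2 : Policy S A),
    J τ μ0 γ R2 π1.1 ≤ J τ μ0 γ R2 π2.1 →
    J τ μ0 γ R1 π1.1 - J τ μ0 γ R1 π2.1 ≤
      U * (maxJ τ μ0 γ R1 - minJ τ μ0 γ R1) * d R1 R2

/-- Completeness of a pseudometric on reward space. -/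
def Complete {S A : Type*} [Fintype S] [Fintype A]
    (τ : S → A → S → ℝ) (μ0 : S → ℝ) (γ : ℝ)
    (d : Reward S A → Reward S A → ℝ) : Prop :=
  (∃ L : ℝ, 0 < L ∧ ∀ R1 R2 : Reward S A, ∃ π1 π2 : Policy S A,
    J τ μ0 γ R2 π1.1 ≤ J τ μ0 γ R2 π2.1 ∧
    L * (maxJ τ μ0 γ R1 - minJ τ μ0 γ R1) * d R1 R2 ≤
      J τ μ0 γ R1 π1.1 - J τ μ0 γ R1 π2.1) ∧
  ∀ R1 R2 : Reward S A, SameOrder τ μ0 γ R1 R2 → d R1 R2 = 0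

/-- `d` is a pseudometric on reward space. -/
def IsPseudometric {S A : Type*} (d : Reward S A → Reward S A → ℝ) : Prop :=
  (∀ x, d x x = 0) ∧ (∀ x y, 0 ≤ d x y) ∧ (∀ x y, d x y = d y x) ∧
    ∀ x y z, d x z ≤ d x y + d y z

/-- The EPIC canonicalisation. -/
noncomputable def CEpic {S A : Type*} [Fintype S] [Fintype A]
    (DS : S → ℝ) (DA : A → ℝ) (γ : ℝ) (R : Reward S A) : Reward S A :=
  fun s a s' =>
    R s a s'
      + γ * (∑ a', ∑ σ', DA a' * DS σ' * R s' a' σ')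
      - (∑ a', ∑ σ', DA a' * DS σ' * R s a' σ')
      - γ * (∑ σ, ∑ a', ∑ σ', DS σ * DA a' * DS σ' * R σ a' σ')

/-- Mean of `f(S,A,S')` with `S,S' ~ DS` and `A ~ DA` independent. -/
noncomputable def meanD {S A : Type*} [Fintype S] [Fintype A]
    (DS : S → ℝ) (DA : A → ℝ) (f : Reward S A) : ℝ :=
  ∑ s, ∑ a, ∑ s', DS s * DA a * DS s' * f s a s'

/-- Covariance of `f(S,A,S')` and `g(S,A,S')`. -/
noncomputable def covD {S A : Type*} [Fintype S] [Fintype A]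
    (DS : S → ℝ) (DA : A → ℝ) (f g : Reward S A) : ℝ :=
  ∑ s, ∑ a, ∑ s', DS s * DA a * DS s' *
    (f s a s' - meanD DS DA f) * (g s a s' - meanD DS DA g)

/-- Variance of `f(S,A,S')`. -/
noncomputable def varD {S A : Type*} [Fintype S] [Fintype A]
    (DS : S → ℝ) (DA : A → ℝ) (f : Reward S A) : ℝ :=
  covD DS DA f f

/-- Pearson correlation of `f(S,A,S')` and `g(S,A,S')`. -/
noncomputable def pearsonD {S A : Type*} [Fintype S] [Fintype A]
    (DS : S → ℝ) (DA : A → ℝ) (f g : Reward S A) : ℝ :=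
  covD DS DA f g / (Real.sqrt (varD DS DA f) * Real.sqrt (varD DS DA g))

/-- The EPIC distance. -/
noncomputable def DEpic {S A : Type*} [Fintype S] [Fintype A]
    (DS : S → ℝ) (DA : A → ℝ) (γ : ℝ) (R1 R2 : Reward S A) : ℝ :=
  Real.sqrt ((1 - pearsonD DS DA (CEpic DS DA γ R1) (CEpic DS DA γ R2)) / 2)

/-- The DARD canonicalisation. -/
noncomputable def CDard {S A : Type*} [Fintype S] [Fintype A]
    (τ : S → A → S → ℝ) (DA : A → ℝ) (γ : ℝ) (R : Reward S A) : Reward S A :=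
  fun s a s' =>
    R s a s' + ∑ a', DA a' *
      (γ * (∑ σ'', τ s' a' σ'' * R s' a' σ'')
        - (∑ σ', τ s a' σ' * R s a' σ')
        - γ * (∑ σ', ∑ σ'', τ s a' σ' * τ s' a' σ'' * R σ' a' σ''))

/-- The DARD distance. -/
noncomputable def DDard {S A : Type*} [Fintype S] [Fintype A]
    (τ : S → A → S → ℝ) (DS : S → ℝ) (DA : A → ℝ) (γ : ℝ) (R1 R2 : Reward S A) : ℝ :=
  Real.sqrt ((1 - pearsonD DS DA (CDard τ DA γ R1) (CDard τ DA γ R2)) / 2)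

/-- The (unweighted) L2 norm on reward space. -/
noncomputable def l2Norm {S A : Type*} [Fintype S] [Fintype A] (R : Reward S A) : ℝ :=
  Real.sqrt (∑ s, ∑ a, ∑ s', (R s a s') ^ 2)

/-- A weighted L2 norm on reward space. -/
noncomputable def weightedL2 {S A : Type*} [Fintype S] [Fintype A]
    (w : S → A → S → ℝ) (R : Reward S A) : ℝ :=
  Real.sqrt (∑ s, ∑ a, ∑ s', w s a s' * (R s a s') ^ 2)

/-- The L2 norm weighted by the product distribution `DS ⊗ DA ⊗ DS`. -/
noncomputable def l2NormD {S A : Type*} [Fintype S] [Fintype A]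
    (DS : S → ℝ) (DA : A → ℝ) (R : Reward S A) : ℝ :=
  Real.sqrt (∑ s, ∑ a, ∑ s', DS s * DA a * DS s' * (R s a s') ^ 2)

/-- Expected discounted return of a reward function along a sequence of per-timestep
transition distributions. -/
noncomputable def Eret {S A : Type*} [Fintype S] [Fintype A]
    (γ : ℝ) (R : Reward S A) (p : ℕ → (S × A × S) → ℝ) : ℝ :=
  ∑' t : ℕ, γ ^ t * ∑ x : S × A × S, p t x * R x.1 x.2.1 x.2.2


section AngleHelpers

open InnerProductGeometry Real


private lemma le_of_sq_le_sq' {a b : ℝ} (ha : 0 ≤ a) (hb : 0 ≤ b) (h : a^2 ≤ b^2) : a ≤ b := by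
  calc a = Real.sqrt (a^2) := (Real.sqrt_sq ha).symm
    _ ≤ Real.sqrt (b^2) := Real.sqrt_le_sqrt h
    _ = b := Real.sqrt_sq hb

private lemma norm_mul_sin_sq {F : Type*} [NormedAddCommGroup F] [InnerProductSpace ℝ F]
    (x y : F) (hx : x ≠ 0) (hy : y ≠ 0) :
    (‖x‖ * Real.sin (angle x y))^2 * ‖y‖^2 = ‖x‖^2 * ‖y‖^2 - (inner ℝ x y : ℝ)^2 := by
  have hx' : (0:ℝ) < ‖x‖ := norm_pos_iff.mpr hx
  have hy' : (0:ℝ) < ‖y‖ := norm_pos_iff.mpr hy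
  have hc := InnerProductGeometry.cos_angle x y
  have hs := Real.sin_sq (angle x y)
  rw [mul_pow, hs, hc]
  field_simp

private lemma norm_sub_smul_sq {F : Type*} [NormedAddCommGroup F] [InnerProductSpace ℝ F]
    (x y : F) (s : ℝ) :
    ‖x - s • y‖^2 = ‖x‖^2 - 2 * s * (inner ℝ x y : ℝ) + s^2 * ‖y‖^2 := by
  rw [norm_sub_sq_real, real_inner_smul_right, norm_smul]
  simp [mul_pow, sq_abs]
  ring

/-- distance to any point on the line is at least ‖x‖ sin θ -/
private lemma norm_mul_sin_angle_le {F : Type*} [NormedAddCommGroup F] [InnerProductSpace ℝ F]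
    (x y : F) (hy : y ≠ 0) (s : ℝ) :
    ‖x‖ * Real.sin (angle x y) ≤ ‖x - s • y‖ := by
  rcases eq_or_ne x 0 with rfl | hx
  · simp
  have hx' : (0:ℝ) < ‖x‖ := norm_pos_iff.mpr hx
  have hy' : (0:ℝ) < ‖y‖ := norm_pos_iff.mpr hy
  have hsin : 0 ≤ Real.sin (angle x y) :=
    Real.sin_nonneg_of_nonneg_of_le_pi (angle_nonneg _ _) (angle_le_pi _ _)
  apply le_of_sq_le_sq' (by positivity) (norm_nonneg _)
  have h1 := norm_mul_sin_sq x y hx hy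
  have h2 := norm_sub_smul_sq x y s
  nlinarith [sq_nonneg (s * ‖y‖^2 - (inner ℝ x y : ℝ)), mul_pos hy' hy', sq_nonneg (‖x - s • y‖)]

private lemma exists_norm_sub_eq {F : Type*} [NormedAddCommGroup F] [InnerProductSpace ℝ F]
    (x y : F) (hx : x ≠ 0) (hy : y ≠ 0) :
    ∃ s : ℝ, ‖x - s • y‖ = ‖x‖ * Real.sin (angle x y) := by
  have hx' : (0:ℝ) < ‖x‖ := norm_pos_iff.mpr hx
  have hy' : (0:ℝ) < ‖y‖ := norm_pos_iff.mpr hy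
  have hsin : 0 ≤ Real.sin (angle x y) :=
    Real.sin_nonneg_of_nonneg_of_le_pi (angle_nonneg _ _) (angle_le_pi _ _)
  refine ⟨(inner ℝ x y : ℝ) / ‖y‖^2, ?_⟩
  have h1 := norm_mul_sin_sq x y hx hy
  have h2 := norm_sub_smul_sq x y ((inner ℝ x y : ℝ) / ‖y‖^2)
  have hsq : ‖x - ((inner ℝ x y : ℝ) / ‖y‖^2) • y‖^2 = (‖x‖ * Real.sin (angle x y))^2 := by
    rw [h2]
    have : ‖y‖^2 ≠ 0 := by positivity
    field_simp at h1 ⊢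
    nlinarith [h1]
  calc ‖x - ((inner ℝ x y : ℝ) / ‖y‖^2) • y‖
      = Real.sqrt (‖x - ((inner ℝ x y : ℝ) / ‖y‖^2) • y‖^2) := (Real.sqrt_sq (norm_nonneg _)).symm
    _ = Real.sqrt ((‖x‖ * Real.sin (angle x y))^2) := by rw [hsq]
    _ = _ := Real.sqrt_sq (by positivity)

private lemma sin_angle_map {F : Type*} [NormedAddCommGroup F] [InnerProductSpace ℝ F]
    (T : F →ₗ[ℝ] F) (C C' : ℝ)
    (hC : ∀ x, ‖T x‖ ≤ C * ‖x‖) (hC' : ∀ x, ‖x‖ ≤ C' * ‖T x‖)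
    (v w : F) (hv : v ≠ 0) (hw : w ≠ 0) :
    Real.sin (angle v w) ≤ C * C' * Real.sin (angle (T v) (T w)) := by
  have hv' : (0:ℝ) < ‖v‖ := norm_pos_iff.mpr hv
  have hC'pos : 0 < C' := by
    rcases lt_or_ge 0 C' with h | h
    · exact h
    · exfalso; have := hC' v; nlinarith [norm_nonneg (T v), mul_nonpos_of_nonpos_of_nonneg h (norm_nonneg (T v))]
  have hTv : T v ≠ 0 := by
    intro h
    have := hC' v
    rw [h] at this
    simp at this
    exact hv this
  have hTw : T w ≠ 0 := by
    intro h
    have hw' : (0:ℝ) < ‖w‖ := norm_pos_iff.mpr hw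
    have := hC' w
    rw [h] at this
    simp at this
    exact hw this
  obtain ⟨s, hs⟩ := exists_norm_sub_eq (T v) (T w) hTv hTw
  have h1 : ‖v‖ * Real.sin (angle v w) ≤ ‖v - s • w‖ := norm_mul_sin_angle_le v w hw s
  have h2 : ‖v - s • w‖ ≤ C' * ‖T (v - s • w)‖ := hC' _
  have h3 : T (v - s • w) = T v - s • T w := by simp
  rw [h3, hs] at h2
  have h4 : ‖T v‖ ≤ C * ‖v‖ := hC v
  have hsin' : 0 ≤ Real.sin (angle (T v) (T w)) :=
    Real.sin_nonneg_of_nonneg_of_le_pi (angle_nonneg _ _) (angle_le_pi _ _)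
  have key : ‖v‖ * Real.sin (angle v w) ≤ C' * (C * ‖v‖) * Real.sin (angle (T v) (T w)) := by
    nlinarith [mul_nonneg hC'pos.le hsin']
  nlinarith [key]


private lemma aux_kappa {C C' x m : ℝ} (hx : 0 < x) (h1 : x ≤ C' * m)
    (h2 : m ≤ C * x) (hC' : 0 ≤ C') : 1 ≤ C * C' := by nlinarith

private lemma aux_pos1 {C C' : ℝ} (hC : 0 ≤ C) (hC' : 0 ≤ C') (h : 1 ≤ C * C') :
    0 < C ∧ 0 < C' := by constructor <;> nlinarith

private lemma aux_pik {p κ : ℝ} (hp : 3 < p) (hκ : 1 ≤ κ) :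
    3 ≤ p * κ ∧ 9 ≤ p^2 * κ^2 := by
  have h1 : 3 ≤ p * κ := by nlinarith
  exact ⟨h1, by nlinarith⟩

private lemma aux_acute {κ p θ θ' s s' : ℝ} (hκ : 1 ≤ κ) (hp : 3 < p)
    (hθ0 : 0 ≤ θ) (hθ'0 : 0 ≤ θ') (hs' : 0 ≤ s')
    (h1 : 2 * θ ≤ p * s) (h2 : s ≤ κ * s') (h3 : s' ≤ θ') :
    2 / (p^2 * κ^2) * θ ≤ θ' := by
  have hppos : (0:ℝ) < p := by linarith
  have hκpos : (0:ℝ) < κ := by linarith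
  have hpk : (0:ℝ) < p^2 * κ^2 := by positivity
  have h4 : 1 ≤ p * κ := by nlinarith
  rw [div_mul_eq_mul_div, div_le_iff₀ hpk]
  have e1 : p * s ≤ p * (κ * s') := by nlinarith
  have e2 : p * κ * s' ≤ p * κ * θ' := by nlinarith [mul_nonneg hppos.le hκpos.le]
  have e3 : p * κ * θ' ≤ p^2 * κ^2 * θ' := by
    nlinarith [mul_nonneg (mul_nonneg hppos.le hκpos.le) hθ'0, h4]
  linarith

private lemma aux_far {κ p θ θ' s s' : ℝ} (hκ : 1 ≤ κ) (hp : 3 < p)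
    (hθ0 : 0 ≤ θ) (hθp : θ ≤ p) (hθ'0 : 0 ≤ θ') (hs : 0 ≤ s) (hs' : 0 ≤ s')
    (h7 : 1 ≤ (p - θ) * κ) (h8 : 2 * (p - θ) ≤ p * s)
    (h2 : s ≤ κ * s') (h3 : s' ≤ θ') :
    2 / (p^2 * κ^2) * θ ≤ θ' := by
  have hppos : (0:ℝ) < p := by linarith
  have hκpos : (0:ℝ) < κ := by linarith
  have hpk : (0:ℝ) < p^2 * κ^2 := by positivity
  have e1 : 2 ≤ 2 * (p - θ) * κ := by nlinarith
  have e2 : 2 * (p - θ) * κ ≤ p * s * κ := by nlinarith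
  have e3 : p * s * κ ≤ p * κ * (κ * s') := by
    nlinarith [mul_nonneg hppos.le hκpos.le]
  have e4 : p * κ * (κ * s') ≤ p * κ^2 * θ' := by
    nlinarith [mul_nonneg (mul_nonneg hppos.le hκpos.le) hκpos.le]
  have e5 : 2 ≤ p * κ^2 * θ' := by linarith
  have e6 : 2 * p ≤ p^2 * κ^2 * θ' := by nlinarith
  rw [div_mul_eq_mul_div, div_le_iff₀ hpk]
  linarith

private lemma aux_near_lt {C C' a m : ℝ} (ha : 0 ≤ a) (hC'pos : 0 < C')
    (hnear : a * (C * C') < 1) (hD : 1 ≤ C' * m) : C * a < m := by nlinarith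

private lemma aux_near_inner {i q m b : ℝ} (key : i = q - m^2) (hA : q ≤ m * b)
    (hlt : b < m) (hm : 0 < m) : i < 0 := by nlinarith

private lemma aux_half {l θ θ' p : ℝ} (hl : 0 ≤ l) (hlh : l ≤ 1/2)
    (hθ0 : 0 ≤ θ) (hθp : θ ≤ p) (hbig : p/2 < θ') : l * θ ≤ θ' := by nlinarith

/-- an invertible linear map on Euclidean space contracts angles by at
most a constant factor. -/
theorem invertible_map_angle_lower_bound
    (n : ℕ) (hn : 1 ≤ n)
    (M : EuclideanSpace ℝ (Fin n) →ₗ[ℝ] EuclideanSpace ℝ (Fin n))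
    (hM : Function.Bijective M) :
    ∃ l : ℝ, l ∈ Set.Ioc (0 : ℝ) 1 ∧
      ∀ v w : EuclideanSpace ℝ (Fin n), v ≠ 0 → w ≠ 0 →
        l * InnerProductGeometry.angle v w ≤
          InnerProductGeometry.angle (M v) (M w) := by
  classical
  obtain ⟨C, C', hCn, hC'n, hC, hC'⟩ :
      ∃ C C' : ℝ, 0 ≤ C ∧ 0 ≤ C' ∧
        (∀ x : EuclideanSpace ℝ (Fin n), ‖M x‖ ≤ C * ‖x‖) ∧
        (∀ x : EuclideanSpace ℝ (Fin n), ‖x‖ ≤ C' * ‖M x‖) := by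
    let eL : EuclideanSpace ℝ (Fin n) ≃ₗ[ℝ] EuclideanSpace ℝ (Fin n) :=
      LinearEquiv.ofBijective M hM
    let e : EuclideanSpace ℝ (Fin n) ≃L[ℝ] EuclideanSpace ℝ (Fin n) :=
      eL.toContinuousLinearEquiv
    refine ⟨‖(e : EuclideanSpace ℝ (Fin n) →L[ℝ] EuclideanSpace ℝ (Fin n))‖,
      ‖(e.symm : EuclideanSpace ℝ (Fin n) →L[ℝ] EuclideanSpace ℝ (Fin n))‖,
      norm_nonneg _, norm_nonneg _, ?_, ?_⟩
    · intro x
      exact (e : EuclideanSpace ℝ (Fin n) →L[ℝ] EuclideanSpace ℝ (Fin n)).le_opNorm x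
    · intro x
      have h := (e.symm : EuclideanSpace ℝ (Fin n) →L[ℝ]
        EuclideanSpace ℝ (Fin n)).le_opNorm (e x)
      rw [ContinuousLinearEquiv.coe_coe, ContinuousLinearEquiv.symm_apply_apply] at h
      exact h
  have hx0 : (EuclideanSpace.single (⟨0, hn⟩ : Fin n) (1:ℝ)) ≠ 0 := by
    intro h
    have := congrArg (fun x : EuclideanSpace ℝ (Fin n) => x (⟨0, hn⟩ : Fin n)) h
    simp [EuclideanSpace.single] at this
  have hx0' : (0:ℝ) < ‖(EuclideanSpace.single (⟨0, hn⟩ : Fin n) (1:ℝ))‖ :=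
    norm_pos_iff.mpr hx0
  have hκ : 1 ≤ C * C' :=
    aux_kappa hx0' (hC' (EuclideanSpace.single (⟨0, hn⟩ : Fin n) (1:ℝ)))
      (hC (EuclideanSpace.single (⟨0, hn⟩ : Fin n) (1:ℝ))) hC'n
  set κ : ℝ := C * C' with hκdef
  have hκpos : (0:ℝ) < κ := lt_of_lt_of_le one_pos hκ
  obtain ⟨hCpos, hC'pos⟩ := aux_pos1 hCn hC'n hκ
  have hπ : (0:ℝ) < π := Real.pi_pos
  have hπ3 : (3:ℝ) < π := Real.pi_gt_three
  obtain ⟨hπκ3, hbig⟩ := aux_pik hπ3 hκ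
  have hp : (0:ℝ) < π^2 * κ^2 := by positivity
  refine ⟨2 / (π^2 * κ^2), ⟨by positivity, ?_⟩, ?_⟩
  · rw [div_le_one hp]; linarith
  set l : ℝ := 2 / (π^2 * κ^2) with hldef
  have hlpos : 0 < l := by positivity
  have hlhalf : l ≤ 1/2 := by
    rw [hldef, div_le_div_iff₀ hp (by norm_num)]
    linarith
  intro v w hv hw
  have hv' : (0:ℝ) < ‖v‖ := norm_pos_iff.mpr hv
  have hw' : (0:ℝ) < ‖w‖ := norm_pos_iff.mpr hw
  set θ : ℝ := angle v w with hθdef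
  set θ' : ℝ := angle (M v) (M w) with hθ'def
  have hθ0 : 0 ≤ θ := angle_nonneg _ _
  have hθπ : θ ≤ π := angle_le_pi _ _
  have hθ'0 : 0 ≤ θ' := angle_nonneg _ _
  have hθ'π : θ' ≤ π := angle_le_pi _ _
  have hsθ' : 0 ≤ Real.sin θ' := Real.sin_nonneg_of_nonneg_of_le_pi hθ'0 hθ'π
  have hsθ : 0 ≤ Real.sin θ := Real.sin_nonneg_of_nonneg_of_le_pi hθ0 hθπ
  have hsinlem : Real.sin θ ≤ κ * Real.sin θ' := by
    rw [hκdef]; exact sin_angle_map M C C' hC hC' v w hv hw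
  have hθ'sin : Real.sin θ' ≤ θ' := Real.sin_le hθ'0
  rcases le_or_gt θ (π/2) with hcase | hcase
  · -- acute case
    have h1 : 2/π * θ ≤ Real.sin θ := Real.mul_le_sin hθ0 hcase
    have h1' : 2 * θ ≤ π * Real.sin θ := by
      have h := mul_le_mul_of_nonneg_left h1 hπ.le
      calc 2 * θ = π * (2/π * θ) := by field_simp
        _ ≤ π * Real.sin θ := h
    exact aux_acute hκ hπ3 hθ0 hθ'0 hsθ' h1' hsinlem hθ'sin
  · -- obtuse case: use unit vectors
    set u : EuclideanSpace ℝ (Fin n) := ‖v‖⁻¹ • v with hudef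
    set u' : EuclideanSpace ℝ (Fin n) := ‖w‖⁻¹ • w with hu'def
    have hnu : ‖u‖ = 1 := norm_smul_inv_norm hv
    have hnu' : ‖u'‖ = 1 := norm_smul_inv_norm hw
    have hau : angle u u' = θ := by
      rw [hudef, hu'def, angle_smul_left_of_pos _ _ (by positivity),
        angle_smul_right_of_pos _ _ (by positivity), hθdef]
    have hMu : M u = ‖v‖⁻¹ • M v := by rw [hudef, map_smul]
    have hMu' : M u' = ‖w‖⁻¹ • M w := by rw [hu'def, map_smul]
    have hau' : angle (M u) (M u') = θ' := by
      rw [hMu, hMu', angle_smul_left_of_pos _ _ (by positivity),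
        angle_smul_right_of_pos _ _ (by positivity), hθ'def]
    have hcosθ : (inner ℝ u u' : ℝ) = Real.cos θ := by
      rw [← hau, InnerProductGeometry.cos_angle, hnu, hnu']
      simp
    have hch : 0 ≤ Real.cos (θ/2) :=
      Real.cos_nonneg_of_mem_Icc ⟨by linarith, by linarith⟩
    have hval : ‖u + u'‖ = 2 * Real.cos (θ/2) := by
      have hcs := Real.cos_sq (θ/2)
      rw [show 2 * (θ/2) = θ by ring] at hcs
      have hsq : ‖u + u'‖^2 = (2 * Real.cos (θ/2))^2 := by
        rw [norm_add_sq_real, hnu, hnu', hcosθ]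
        linear_combination (-4) * hcs
      calc ‖u + u'‖ = Real.sqrt (‖u + u'‖^2) := (Real.sqrt_sq (norm_nonneg _)).symm
        _ = Real.sqrt ((2 * Real.cos (θ/2))^2) := by rw [hsq]
        _ = 2 * Real.cos (θ/2) := Real.sqrt_sq (by positivity)
    rcases lt_or_ge (‖u + u'‖ * κ) 1 with hnear | hfar
    · -- θ near π : show θ' > π/2
      have hune : u ≠ 0 := by
        intro h; rw [h] at hnu; simp at hnu
      have hu'ne : u' ≠ 0 := by
        intro h; rw [h] at hnu'; simp at hnu'
      have hMune : M u ≠ 0 := fun h => hune (hM.injective (by simpa using h))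
      have hMu'ne : M u' ≠ 0 := fun h => hu'ne (hM.injective (by simpa using h))
      have hMupos : (0:ℝ) < ‖M u‖ := norm_pos_iff.mpr hMune
      have hMu'pos : (0:ℝ) < ‖M u'‖ := norm_pos_iff.mpr hMu'ne
      have hD : 1 ≤ C' * ‖M u‖ := by have h := hC' u; rwa [hnu] at h
      have hlt : C * ‖u + u'‖ < ‖M u‖ :=
        aux_near_lt (norm_nonneg _) hC'pos (by rw [← hκdef]; exact hnear) hD
      have hinner : (inner ℝ (M u) (M u') : ℝ) < 0 := by
        have key : (inner ℝ (M u) (M u') : ℝ) =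
            (inner ℝ (M u) (M (u + u')) : ℝ) - ‖M u‖^2 := by
          rw [map_add, inner_add_right, real_inner_self_eq_norm_sq]; ring
        exact aux_near_inner key (real_inner_le_norm _ _)
          (lt_of_le_of_lt (hC (u + u')) hlt) hMupos
      have hcos' : Real.cos θ' < 0 := by
        rw [← hau', InnerProductGeometry.cos_angle]
        exact div_neg_of_neg_of_pos hinner (by positivity)
      have hθ'big : π/2 < θ' := by
        by_contra hle
        push_neg at hle
        have := Real.cos_nonneg_of_mem_Icc ⟨by linarith, hle⟩
        linarith
      exact aux_half hlpos.le hlhalf hθ0 hθπ hθ'big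
    · -- θ far from π
      have h6 : ‖u + u'‖ ≤ π - θ := by
        have hs2 : Real.sin ((π - θ)/2) ≤ (π - θ)/2 := Real.sin_le (by linarith)
        have heq : Real.sin ((π - θ)/2) = Real.cos (θ/2) := by
          rw [show (π - θ)/2 = π/2 - θ/2 by ring, Real.sin_pi_div_two_sub]
        rw [hval, ← heq]
        linarith
      have h7 : 1 ≤ (π - θ) * κ := by
        have := mul_le_mul_of_nonneg_right h6 hκpos.le
        linarith
      have h8 : 2/π * (π - θ) ≤ Real.sin (π - θ) :=
        Real.mul_le_sin (by linarith) (by linarith)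
      rw [Real.sin_pi_sub] at h8
      have h8' : 2 * (π - θ) ≤ π * Real.sin θ := by
        have h := mul_le_mul_of_nonneg_left h8 hπ.le
        calc 2 * (π - θ) = π * (2/π * (π - θ)) := by field_simp
          _ ≤ π * Real.sin θ := h
      exact aux_far hκ hπ3 hθ0 hθπ hθ'0 hsθ hsθ' h7 h8' hsinlem hθ'sin

end AngleHelpers


end RewardPaper
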